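/- The SDD interpretation σ is a natural transformation from the SDD functor 𝒮 to 𝒫̄²: for every f : X → Y and every SDD α over X, σ_Y(𝒮(f)(α)) = 𝒫̄²(f)(σ_X(α)). -/
import Mathlib


/-- SDDs over X: terminals ⊤, ⊥, literals x, ¬x, and decompositions. -/
inductive SDD (X : Type) where
  | top : SDD X
  | bot : SDD X
  | lit (x : X) : SDD X
  | nlit (x : X) : SDD X
  | decomp (l : List (SDD X × SDD X)) : SDD X

mutual
/-- Relabeling of SDDs (action of the functor 𝒮 on maps). -/
def Smap {X Y : Type} (f : X → Y) : SDD X → SDD Y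
  | .top => .top
  | .bot => .bot
  | .lit x => .lit (f x)
  | .nlit x => .nlit (f x)
  | .decomp l => .decomp (SmapList f l)

def SmapList {X Y : Type} (f : X → Y) :
    List (SDD X × SDD X) → List (SDD Y × SDD Y)
  | [] => []
  | (p, s) :: rest => (Smap f p, Smap f s) :: SmapList f rest
end

mutual
/-- SDD semantics σ_X : 𝒮(X) → 𝒫²(X). -/
def sddSem {X : Type} : SDD X → Set (Set X)
  | .top => Set.univ
  | .bot => ∅
  | .lit x => {C | x ∈ C}
  | .nlit x => {C | x ∉ C}
  | .decomp l => sddSemList l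

/-- Semantics of a decomposition: ⋃ᵢ σ(pᵢ) ∩ σ(sᵢ). -/
def sddSemList {X : Type} : List (SDD X × SDD X) → Set (Set X)
  | [] => ∅
  | (p, s) :: rest => (sddSem p ∩ sddSem s) ∪ sddSemList rest
end

/-- Double contravariant power set functor action (covariant): preimage test. -/
def Pbar2 {X Y : Type} (f : X → Y) (S : Set (Set X)) : Set (Set Y) := {B | f ⁻¹' B ∈ S}

mutual
theorem sdd_natural' {X Y : Type} (f : X → Y) (α : SDD X) :
    sddSem (Smap f α) = Pbar2 f (sddSem α) := by
  cases α with
  | top => ext B; simp [Smap, sddSem, Pbar2]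
  | bot => ext B; simp [Smap, sddSem, Pbar2]
  | lit x => ext B; simp [Smap, sddSem, Pbar2, Set.preimage]
  | nlit x => ext B; simp [Smap, sddSem, Pbar2, Set.preimage]
  | decomp l => simpa [Smap, sddSem] using sdd_naturalList f l

theorem sdd_naturalList {X Y : Type} (f : X → Y) (l : List (SDD X × SDD X)) :
    sddSemList (SmapList f l) = Pbar2 f (sddSemList l) := by
  cases l with
  | nil => ext B; simp [SmapList, sddSemList, Pbar2]
  | cons h rest =>
    obtain ⟨p, s⟩ := h
    have hp := sdd_natural' f p
    have hs := sdd_natural' f s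
    have hr := sdd_naturalList f rest
    ext B
    simp [SmapList, sddSemList, hp, hs, hr, Pbar2]
end

theorem sdd_natural {X Y : Type} (f : X → Y) (α : SDD X) :
    sddSem (Smap f α) = Pbar2 f (sddSem α) := sdd_natural' f α
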